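/- Let Λ* := Λ(1) be the growth rate constructed in the linear-instability proposition (so Λ(τ) > 0 satisfies Λ(τ) = sup_{(ϖ,φ)∈𝒜} F(ϖ,φ,Λ(τ),τ)), under the assumptions R > R₀ and √Q ≤ Λ₀/(2√𝓡). If in addition Q ∈ [0,1), then Λ₀ − √(Q𝓡) ≤ Λ* ≤ Λ(1−√Q) ≤ (1−√Q)Λ₀ + R√(Q/P_ϑ). -/

import Mathlib

open MeasureTheory Real Filter Topology Set

noncomputable section

namespace MB

abbrev E3 := EuclideanSpace ℝ (Fin 3)
abbrev V := Fin 3 → ℝ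

def e3 (i : Fin 3) : E3 := EuclideanSpace.single i 1

/-- directional derivative ∂ᵢ -/
def pd {F : Type*} [NormedAddCommGroup F] [NormedSpace ℝ F] (i : Fin 3) (f : E3 → F) :
    E3 → F := fun y => fderiv ℝ f y (e3 i)

/-- iterated horizontal derivative ∂₁^{o₁} ∂₂^{o₂} -/
def hD {F : Type*} [NormedAddCommGroup F] [NormedSpace ℝ F] (o₁ o₂ : ℕ) (f : E3 → F) :
    E3 → F := (pd (0 : Fin 3))^[o₁] ((pd (1 : Fin 3))^[o₂] f)

/-- fundamental periodic cell of the horizontally periodic layer of height h -/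
def cell (L₁ L₂ h : ℝ) : Set E3 :=
  {y | y 0 ∈ Ioo 0 (2 * π * L₁) ∧ y 1 ∈ Ioo 0 (2 * π * L₂) ∧ y 2 ∈ Ioo 0 h}

def layer (h : ℝ) : Set E3 := {y | y 2 ∈ Ioo 0 h}

def onBd (h : ℝ) (y : E3) : Prop := y 2 = 0 ∨ y 2 = h

def HPeriodic {F : Type*} (L₁ L₂ : ℝ) (f : E3 → F) : Prop :=
  ∀ y : E3, f (y + (2 * π * L₁) • e3 0) = f y ∧ f (y + (2 * π * L₂) • e3 1) = f y

def ZeroBd {F : Type*} [Zero F] (h : ℝ) (f : E3 → F) : Prop :=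
  ∀ y : E3, onBd h y → f y = 0

def L2SqS (S : Set E3) (f : E3 → ℝ) : ℝ := ∫ y in S, (f y) ^ 2
def L2SqV (S : Set E3) (f : E3 → V) : ℝ := ∫ y in S, ∑ i, (f y i) ^ 2
def L1S (S : Set E3) (f : E3 → ℝ) : ℝ := ∫ y in S, |f y|
def L1V (S : Set E3) (f : E3 → V) : ℝ := ∫ y in S, Real.sqrt (∑ i, (f y i) ^ 2)
def ip (S : Set E3) (f g : E3 → ℝ) : ℝ := ∫ y in S, f y * g y
def ipV (S : Set E3) (f g : E3 → V) : ℝ := ∫ y in S, ∑ i, f y i * g y i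
def ipGrad (S : Set E3) (f g : E3 → ℝ) : ℝ := ∫ y in S, ∑ i, pd i f y * pd i g y
def gradSqS (S : Set E3) (f : E3 → ℝ) : ℝ := ∫ y in S, ∑ i, (pd i f y) ^ 2
def gradSqV (S : Set E3) (f : E3 → V) : ℝ := ∫ y in S, ∑ i, ∑ j, (pd i f y j) ^ 2

def comp3 (f : E3 → V) : E3 → ℝ := fun y => f y 2
def div3 (f : E3 → V) : E3 → ℝ := fun y => ∑ i, pd i f y i
def gradS (f : E3 → ℝ) : E3 → V := fun y i => pd i f y
def lapF {F : Type*} [NormedAddCommGroup F] [NormedSpace ℝ F] (f : E3 → F) : E3 → F :=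
  fun y => ∑ i, pd i (pd i f) y

/-- squared H^k norm -/
def HkSq {F : Type*} [NormedAddCommGroup F] [NormedSpace ℝ F] (S : Set E3) (k : ℕ)
    (f : E3 → F) : ℝ :=
  ∑ n ∈ Finset.range (k + 1), ∫ y in S, ‖iteratedFDeriv ℝ n f y‖ ^ 2

/-- ‖f‖_{m,0}² for scalars -/
def hm0SqS (S : Set E3) (m : ℕ) (f : E3 → ℝ) : ℝ :=
  ∑ o ∈ Finset.range (m + 1), L2SqS S (hD o (m - o) f)
/-- ‖f‖_{m,0}² for vector fields -/
def hm0SqV (S : Set E3) (m : ℕ) (f : E3 → V) : ℝ :=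
  ∑ o ∈ Finset.range (m + 1), L2SqV S (hD o (m - o) f)
/-- ‖f‖_{m̲,0}² (underline norm) for vector fields -/
def uh0SqV (S : Set E3) (k : ℕ) (f : E3 → V) : ℝ :=
  ∑ m ∈ Finset.range (k + 1), hm0SqV S m f
def uh0SqS (S : Set E3) (k : ℕ) (f : E3 → ℝ) : ℝ :=
  ∑ m ∈ Finset.range (k + 1), hm0SqS S m f
/-- ‖∇f‖_{m,0}² for vector fields -/
def gradHm0SqV (S : Set E3) (m : ℕ) (f : E3 → V) : ℝ :=
  ∑ o ∈ Finset.range (m + 1), gradSqV S (hD o (m - o) f)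
def gradHm0SqS (S : Set E3) (m : ℕ) (f : E3 → ℝ) : ℝ :=
  ∑ o ∈ Finset.range (m + 1), gradSqS S (hD o (m - o) f)
/-- ‖∂₃f‖_{m,0}² -/
def d3Hm0SqV (S : Set E3) (m : ℕ) (f : E3 → V) : ℝ :=
  ∑ o ∈ Finset.range (m + 1), L2SqV S (hD o (m - o) (pd 2 f))

/- function classes (smooth representatives) -/
def memL2S (L₁ L₂ : ℝ) (f : E3 → ℝ) : Prop := ContDiff ℝ (⊤ : ℕ∞) f ∧ HPeriodic L₁ L₂ f
def memH0S (L₁ L₂ h : ℝ) (f : E3 → ℝ) : Prop := memL2S L₁ L₂ f ∧ ZeroBd h f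
def memH0V (L₁ L₂ h : ℝ) (f : E3 → V) : Prop :=
  ContDiff ℝ (⊤ : ℕ∞) f ∧ HPeriodic L₁ L₂ f ∧ ZeroBd h f
def memHσ (L₁ L₂ h : ℝ) (f : E3 → V) : Prop := memH0V L₁ L₂ h f ∧ ∀ y, div3 f y = 0
def memHbar (L₁ L₂ h : ℝ) (f : E3 → ℝ) : Prop :=
  memL2S L₁ L₂ f ∧ ∫ y in cell L₁ L₂ h, f y = 0

/- variational quantities (unit height layer) -/

def Upsilon1 (L₁ L₂ R Q Pθ : ℝ) : ℝ :=
  sSup {r | ∃ φ ψ, memHσ L₁ L₂ 1 φ ∧ memL2S L₁ L₂ ψ ∧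
    r = 4 * R * ip (cell L₁ L₂ 1) (comp3 φ) ψ /
        (Q * L2SqV (cell L₁ L₂ 1) (pd 2 φ) + Pθ * L2SqS (cell L₁ L₂ 1) ψ +
          2 * R ^ 2 * L2SqS (cell L₁ L₂ 1) (comp3 φ) / Pθ)}

/-- 𝒟̃_{1,1} -/
def D11 (L₁ L₂ Q : ℝ) (φ ψ : E3 → V) (χ : E3 → ℝ) : ℝ :=
  Q * (∑ m ∈ Finset.range 4, d3Hm0SqV (cell L₁ L₂ 1) m φ) +
    2 * ∑ m ∈ Finset.range 3,
      (gradHm0SqV (cell L₁ L₂ 1) m ψ + gradHm0SqS (cell L₁ L₂ 1) m χ)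

/-- 𝒟̃_{1,2} -/
def D12 (L₁ L₂ R Pθ : ℝ) (φ ψ : E3 → V) (χ : E3 → ℝ) : ℝ :=
  (∑ m ∈ Finset.range 4, hm0SqV (cell L₁ L₂ 1) m ψ) +
    (4 * R / Pθ) * ∑ m ∈ Finset.range 3, ∑ o ∈ Finset.range (m + 1),
        ipGrad (cell L₁ L₂ 1) (hD o (m - o) (comp3 φ)) (hD o (m - o) χ) +
    R * ∑ m ∈ Finset.range 4, ∑ o ∈ Finset.range (m + 1),
        ip (cell L₁ L₂ 1) (hD o (m - o) (comp3 φ)) (hD o (m - o) χ)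

def Upsilon2 (L₁ L₂ R Q Pθ : ℝ) : ℝ :=
  sSup {r | ∃ φ ψ χ, memHσ L₁ L₂ 1 φ ∧ memHσ L₁ L₂ 1 ψ ∧ memH0S L₁ L₂ 1 χ ∧
    r = D12 L₁ L₂ R Pθ φ ψ χ / D11 L₁ L₂ Q φ ψ χ}

/-- the quadratic functional E₁ -/
def E1fun (L₁ L₂ R Q Pθ : ℝ) (φ : E3 → V) (χ : E3 → ℝ) : ℝ :=
  Q * L2SqV (cell L₁ L₂ 1) (pd 2 φ) + 2 * R ^ 2 / Pθ * L2SqS (cell L₁ L₂ 1) (comp3 φ) +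
    Pθ * L2SqS (cell L₁ L₂ 1) χ - 4 * R * ip (cell L₁ L₂ 1) (comp3 φ) χ

def DRfun (L₁ L₂ R : ℝ) (ϖ : E3 → V) (φ : E3 → ℝ) (τ : ℝ) : ℝ :=
  2 * R * ip (cell L₁ L₂ 1) (comp3 ϖ) φ - τ * gradSqV (cell L₁ L₂ 1) ϖ -
    gradSqS (cell L₁ L₂ 1) φ

def Ffun (L₁ L₂ R Q : ℝ) (ϖ : E3 → V) (φ : E3 → ℝ) (s τ : ℝ) : ℝ :=
  DRfun L₁ L₂ R ϖ φ τ - Q / s * L2SqV (cell L₁ L₂ 1) (pd 2 ϖ)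

def admissible (L₁ L₂ Pθ : ℝ) (ϖ : E3 → V) (φ : E3 → ℝ) : Prop :=
  memHσ L₁ L₂ 1 ϖ ∧ memH0S L₁ L₂ 1 φ ∧
    L2SqV (cell L₁ L₂ 1) ϖ + Pθ * L2SqS (cell L₁ L₂ 1) φ = 1

def Lambda0 (L₁ L₂ R Pθ : ℝ) : ℝ :=
  sSup {r | ∃ ϖ φ, admissible L₁ L₂ Pθ ϖ φ ∧ r = DRfun L₁ L₂ R ϖ φ 1}

def invR0 (L₁ L₂ : ℝ) : ℝ :=
  sSup {r | ∃ ϖ φ, memHσ L₁ L₂ 1 ϖ ∧ memH0S L₁ L₂ 1 φ ∧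
    r = 2 * ip (cell L₁ L₂ 1) (comp3 ϖ) φ /
        (gradSqV (cell L₁ L₂ 1) ϖ + gradSqS (cell L₁ L₂ 1) φ)}

def R0 (L₁ L₂ : ℝ) : ℝ := (invR0 L₁ L₂)⁻¹

def scrR (L₁ L₂ R Pθ : ℝ) : ℝ := R / Real.sqrt Pθ - Lambda0 L₁ L₂ R Pθ

def alphaFun (L₁ L₂ R Q Pθ s τ : ℝ) : ℝ :=
  sSup {r | ∃ ϖ φ, admissible L₁ L₂ Pθ ϖ φ ∧ r = Ffun L₁ L₂ R Q ϖ φ s τ}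

def xiConst (L₁ L₂ Pθ : ℝ) : ℝ :=
  sSup {r | ∃ ϖ φ, admissible L₁ L₂ Pθ ϖ φ ∧
    2 * ip (cell L₁ L₂ 1) (comp3 ϖ) φ /
        (gradSqV (cell L₁ L₂ 1) ϖ + gradSqS (cell L₁ L₂ 1) φ) = invR0 L₁ L₂ ∧
    r = ip (cell L₁ L₂ 1) (comp3 ϖ) φ}

/- Lagrangian-coordinates operators -/

def gradMat (f : E3 → V) : E3 → Matrix (Fin 3) (Fin 3) ℝ :=
  fun y => Matrix.of fun i j => pd j f y i

/-- 𝒜 = ((I + ∇η)⁻¹)ᵀ -/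
def calA (η : E3 → V) : E3 → Matrix (Fin 3) (Fin 3) ℝ :=
  fun y => ((1 + gradMat η y)⁻¹).transpose

def gradA (η : E3 → V) (f : E3 → ℝ) : E3 → V :=
  fun y i => ∑ k, calA η y i k * pd k f y

def divA (η : E3 → V) (X : E3 → V) : E3 → ℝ :=
  fun y => ∑ l, ∑ k, calA η y l k * pd k X y l

def lapA (η : E3 → V) (f : E3 → ℝ) : E3 → ℝ := divA η (gradA η f)

def lapAV (η : E3 → V) (X : E3 → V) : E3 → V :=
  fun y i => lapA η (fun z => X z i) y

def convA (η : E3 → V) (X Y : E3 → V) : E3 → V :=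
  fun y i => ∑ k, X y k * ∑ j, calA η y k j * pd j Y y i

def volPres (η : E3 → V) : Prop := ∀ y, Matrix.det (1 + gradMat η y) = 1

/- time derivatives -/
def tdV (f : ℝ → E3 → V) : ℝ → E3 → V := fun t y i => deriv (fun s => f s y i) t
def tdS (f : ℝ → E3 → ℝ) : ℝ → E3 → ℝ := fun t y => deriv (fun s => f s y) t
def tdM (f : ℝ → E3 → Matrix (Fin 3) (Fin 3) ℝ) : ℝ → E3 → Matrix (Fin 3) (Fin 3) ℝ :=
  fun t y => Matrix.of fun i j => deriv (fun s => f s y i j) t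

/-- the transformed magnetic Rayleigh–Bénard problem in Lagrangian coordinates -/
structure IsTMB (L₁ L₂ R Q Pθ : ℝ) (Tset : Set ℝ)
    (η u : ℝ → E3 → V) (ϑ q : ℝ → E3 → ℝ) : Prop where
  smooth_η : ContDiff ℝ (⊤ : ℕ∞) (Function.uncurry η)
  smooth_u : ContDiff ℝ (⊤ : ℕ∞) (Function.uncurry u)
  smooth_ϑ : ContDiff ℝ (⊤ : ℕ∞) (Function.uncurry ϑ)
  smooth_q : ContDiff ℝ (⊤ : ℕ∞) (Function.uncurry q)
  periodic : ∀ t ∈ Tset, HPeriodic L₁ L₂ (η t) ∧ HPeriodic L₁ L₂ (u t) ∧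
      HPeriodic L₁ L₂ (ϑ t) ∧ HPeriodic L₁ L₂ (q t)
  bc : ∀ t ∈ Tset, ZeroBd 1 (η t) ∧ ZeroBd 1 (u t) ∧ ZeroBd 1 (ϑ t)
  eq_eta : ∀ t ∈ Tset, ∀ y ∈ layer 1, tdV η t y = u t y
  eq_mom : ∀ t ∈ Tset, ∀ y ∈ layer 1, ∀ i,
      tdV u t y i - lapAV (η t) (u t) y i + gradA (η t) (q t) y i =
        Q * pd 2 (pd 2 (η t)) y i + R * ϑ t y * (if i = (2 : Fin 3) then 1 else 0)
  eq_temp : ∀ t ∈ Tset, ∀ y ∈ layer 1,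
      Pθ * tdS ϑ t y - lapA (η t) (ϑ t) y =
        R * ∑ k, u t y k * gradA (η t) (fun z => z 2 + η t z 2) y k
  eq_div : ∀ t ∈ Tset, ∀ y ∈ layer 1, divA (η t) (u t) y = 0

/-- the zero-resistivity magnetic Rayleigh–Bénard problem (Eulerian) -/
structure IsZMB (L₁ L₂ h g ρ αc lamc ν κ ϖc : ℝ) (Mbar : V) (Tset : Set ℝ)
    (v : ℝ → E3 → V) (θ : ℝ → E3 → ℝ) (N : ℝ → E3 → V) (β : ℝ → E3 → ℝ) : Prop where
  smooth_v : ContDiff ℝ (⊤ : ℕ∞) (Function.uncurry v)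
  smooth_θ : ContDiff ℝ (⊤ : ℕ∞) (Function.uncurry θ)
  smooth_N : ContDiff ℝ (⊤ : ℕ∞) (Function.uncurry N)
  smooth_β : ContDiff ℝ (⊤ : ℕ∞) (Function.uncurry β)
  periodic : ∀ t ∈ Tset, HPeriodic L₁ L₂ (v t) ∧ HPeriodic L₁ L₂ (θ t) ∧
      HPeriodic L₁ L₂ (N t) ∧ HPeriodic L₁ L₂ (β t)
  bc : ∀ t ∈ Tset, ZeroBd h (v t) ∧ ZeroBd h (θ t)
  eq_mom : ∀ t ∈ Tset, ∀ y ∈ layer h, ∀ i,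
      tdV v t y i + (∑ k, v t y k * pd k (v t) y i) + pd i (β t) y =
        g * αc * θ t y * (if i = (2 : Fin 3) then 1 else 0) + ν * lapF (v t) y i +
          lamc / (4 * π * ρ) * ∑ k, (Mbar k + N t y k) * pd k (N t) y i
  eq_temp : ∀ t ∈ Tset, ∀ y ∈ layer h,
      tdS θ t y + (∑ k, v t y k * pd k (θ t) y) - ϖc * v t y 2 = κ * lapF (θ t) y
  eq_mag : ∀ t ∈ Tset, ∀ y ∈ layer h, ∀ i,
      tdV N t y i + (∑ k, v t y k * pd k (N t) y i) =
        ∑ k, (Mbar k + N t y k) * pd k (v t) y i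
  eq_div : ∀ t ∈ Tset, ∀ y ∈ layer h, div3 (v t) y = 0 ∧ div3 (N t) y = 0

/- energy functionals for the transformed MB problem (unit height) -/

def ELfun (L₁ L₂ : ℝ) (η u : ℝ → E3 → V) (ϑ q : ℝ → E3 → ℝ) (t : ℝ) : ℝ :=
  gradHm0SqV (cell L₁ L₂ 1) 3 (η t) + HkSq (cell L₁ L₂ 1) 3 (η t) +
    HkSq (cell L₁ L₂ 1) 3 (u t) + HkSq (cell L₁ L₂ 1) 3 (ϑ t) +
    HkSq (cell L₁ L₂ 1) 1 (tdV u t) + HkSq (cell L₁ L₂ 1) 1 (tdS ϑ t) +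
    HkSq (cell L₁ L₂ 1) 1 (gradS (q t))

/-- E^L = ℰ^L − ‖∇η‖_{3,0}² -/
def ELofun (L₁ L₂ : ℝ) (η u : ℝ → E3 → V) (ϑ q : ℝ → E3 → ℝ) (t : ℝ) : ℝ :=
  HkSq (cell L₁ L₂ 1) 3 (η t) + HkSq (cell L₁ L₂ 1) 3 (u t) + HkSq (cell L₁ L₂ 1) 3 (ϑ t) +
    HkSq (cell L₁ L₂ 1) 1 (tdV u t) + HkSq (cell L₁ L₂ 1) 1 (tdS ϑ t) +
    HkSq (cell L₁ L₂ 1) 1 (gradS (q t))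

def DLfun (L₁ L₂ : ℝ) (η u : ℝ → E3 → V) (ϑ q : ℝ → E3 → ℝ) (t : ℝ) : ℝ :=
  d3Hm0SqV (cell L₁ L₂ 1) 3 (η t) + gradHm0SqV (cell L₁ L₂ 1) 3 (u t) +
    HkSq (cell L₁ L₂ 1) 3 (η t) + HkSq (cell L₁ L₂ 1) 3 (u t) +
    HkSq (cell L₁ L₂ 1) 4 (ϑ t) +
    (∑ k ∈ Finset.range 2,
      (HkSq (cell L₁ L₂ 1) (4 - 2 * (k + 1)) (tdV^[k + 1] u t) +
        HkSq (cell L₁ L₂ 1) (4 - 2 * (k + 1)) (tdS^[k + 1] ϑ t))) +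
    HkSq (cell L₁ L₂ 1) 1 (gradS (q t)) + HkSq (cell L₁ L₂ 1) 0 (gradS (tdS q t))

def EHfun (L₁ L₂ : ℝ) (η u : ℝ → E3 → V) (ϑ q : ℝ → E3 → ℝ) (t : ℝ) : ℝ :=
  gradHm0SqV (cell L₁ L₂ 1) 6 (η t) + HkSq (cell L₁ L₂ 1) 6 (η t) +
    (∑ k ∈ Finset.range 4,
      (HkSq (cell L₁ L₂ 1) (6 - 2 * k) (tdV^[k] u t) +
        HkSq (cell L₁ L₂ 1) (6 - 2 * k) (tdS^[k] ϑ t))) +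
    ∑ k ∈ Finset.range 3, HkSq (cell L₁ L₂ 1) (4 - 2 * k) (gradS (tdS^[k] q t))

/-- E^H = ℰ^H − ‖∇η‖_{6,0}² -/
def EHofun (L₁ L₂ : ℝ) (η u : ℝ → E3 → V) (ϑ q : ℝ → E3 → ℝ) (t : ℝ) : ℝ :=
  HkSq (cell L₁ L₂ 1) 6 (η t) +
    (∑ k ∈ Finset.range 4,
      (HkSq (cell L₁ L₂ 1) (6 - 2 * k) (tdV^[k] u t) +
        HkSq (cell L₁ L₂ 1) (6 - 2 * k) (tdS^[k] ϑ t))) +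
    ∑ k ∈ Finset.range 3, HkSq (cell L₁ L₂ 1) (4 - 2 * k) (gradS (tdS^[k] q t))

def DHfun (L₁ L₂ : ℝ) (η u : ℝ → E3 → V) (ϑ q : ℝ → E3 → ℝ) (t : ℝ) : ℝ :=
  d3Hm0SqV (cell L₁ L₂ 1) 6 (η t) + gradHm0SqV (cell L₁ L₂ 1) 6 (u t) +
    HkSq (cell L₁ L₂ 1) 6 (η t) + HkSq (cell L₁ L₂ 1) 6 (u t) +
    HkSq (cell L₁ L₂ 1) 7 (ϑ t) +
    (∑ k ∈ Finset.range 3,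
      (HkSq (cell L₁ L₂ 1) (7 - 2 * (k + 1)) (tdV^[k + 1] u t) +
        HkSq (cell L₁ L₂ 1) (7 - 2 * (k + 1)) (tdS^[k + 1] ϑ t))) +
    (∑ k ∈ Finset.range 2,
      HkSq (cell L₁ L₂ 1) (5 - 2 * (k + 1)) (gradS (tdS^[k + 1] q t))) +
    HkSq (cell L₁ L₂ 1) 4 (gradS (q t))

/-- 𝒢₁(t) -/
def G1fun (L₁ L₂ : ℝ) (η : ℝ → E3 → V) (t : ℝ) : ℝ :=
  sSup {r | ∃ τ, 0 ≤ τ ∧ τ < t ∧ r = HkSq (cell L₁ L₂ 1) 7 (η τ)}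

def G1inf (L₁ L₂ : ℝ) (η : ℝ → E3 → V) : ℝ :=
  sSup {r | ∃ τ, 0 ≤ τ ∧ r = HkSq (cell L₁ L₂ 1) 7 (η τ)}

def G2inf (L₁ L₂ : ℝ) (η u : ℝ → E3 → V) : ℝ :=
  ∫ τ in Ioi (0 : ℝ),
    (HkSq (cell L₁ L₂ 1) 7 (η τ) + HkSq (cell L₁ L₂ 1) 7 (u τ)) / (1 + τ) ^ ((3 : ℝ) / 2)

def G3inf (L₁ L₂ : ℝ) (η u : ℝ → E3 → V) (ϑ q : ℝ → E3 → ℝ) : ℝ :=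
  sSup {r | ∃ τ, 0 ≤ τ ∧ r = EHfun L₁ L₂ η u ϑ q τ} +
    ∫ τ in Ioi (0 : ℝ), DHfun L₁ L₂ η u ϑ q τ

def G4inf (L₁ L₂ : ℝ) (η u : ℝ → E3 → V) (ϑ q : ℝ → E3 → ℝ) : ℝ :=
  sSup {r | ∃ τ, 0 ≤ τ ∧ r = (1 + τ) ^ 3 * ELfun L₁ L₂ η u ϑ q τ}

/-- 𝔈 -/
def frakE (L₁ L₂ : ℝ) (η u : ℝ → E3 → V) (ϑ q : ℝ → E3 → ℝ) (t : ℝ) : ℝ :=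
  HkSq (cell L₁ L₂ 1) 5 (η t) + HkSq (cell L₁ L₂ 1) 4 (u t) + HkSq (cell L₁ L₂ 1) 4 (ϑ t) +
    HkSq (cell L₁ L₂ 1) 2 (gradS (q t)) + HkSq (cell L₁ L₂ 1) 2 (tdV u t) +
    HkSq (cell L₁ L₂ 1) 2 (tdS ϑ t) + HkSq (cell L₁ L₂ 1) 0 (gradS (tdS q t)) +
    HkSq (cell L₁ L₂ 1) 0 (tdV^[2] u t) + HkSq (cell L₁ L₂ 1) 0 (tdS^[2] ϑ t)

/-- D_u^{t,j} -/
def DtuFun (η u : ℝ → E3 → V) (j : ℕ) : ℝ → E3 → V :=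
  fun t y i => - ∑ l ∈ Finset.range j, (Nat.choose j (j - l) : ℝ) *
      ∑ k, (tdM^[j - l] (fun s => calA (η s))) t y k i * (tdV^[l] u) t y k

/-- ‖∇_𝒜 X‖₀² -/
def gradASqV (S : Set E3) (η X : E3 → V) : ℝ :=
  ∫ y in S, ∑ i, ∑ m, (∑ k, calA η y m k * pd k X y i) ^ 2

/-- reinterpret a plain vector as a point of E3 -/
def toE3 (v : V) : E3 := (EuclideanSpace.equiv (Fin 3) ℝ).symm v

/-- squared L² norm of the horizontal part -/
def L2SqH (S : Set E3) (f : E3 → V) : ℝ := ∫ y in S, ((f y 0) ^ 2 + (f y 1) ^ 2)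

/-- L¹ norm of the horizontal part -/
def L1H (S : Set E3) (f : E3 → V) : ℝ := ∫ y in S, Real.sqrt ((f y 0) ^ 2 + (f y 1) ^ 2)

/-- ‖∇_𝒜 f‖₀² for scalars -/
def gradASqS (S : Set E3) (η : E3 → V) (f : E3 → ℝ) : ℝ :=
  ∫ y in S, ∑ m, (∑ k, calA η y m k * pd k f y) ^ 2

/-- 𝓔̃_{1,1} -/
def tE11 (L₁ L₂ R Q Pθ : ℝ) (φ ψ : E3 → V) (χ : E3 → ℝ) : ℝ :=
  (1 / 2) * (∑ m ∈ Finset.range 4, gradHm0SqV (cell L₁ L₂ 1) m φ) +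
    (∑ m ∈ Finset.range 3, ∑ o ∈ Finset.range (m + 1),
      E1fun L₁ L₂ R Q Pθ (hD o (m - o) φ) (hD o (m - o) χ)) +
    uh0SqV (cell L₁ L₂ 1) 2 ψ

/-- 𝓔̃₁ -/
def tE1 (L₁ L₂ R Q Pθ : ℝ) (φ ψ : E3 → V) (χ : E3 → ℝ) : ℝ :=
  tE11 L₁ L₂ R Q Pθ φ ψ χ +
    ∑ m ∈ Finset.range 4, ∑ o ∈ Finset.range (m + 1),
      ipV (cell L₁ L₂ 1) (hD o (m - o) φ) (hD o (m - o) ψ)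

/-- Ξ₁ -/
def Xi1 (L₁ L₂ : ℝ) (φ : E3 → V) : ℝ :=
  HkSq (cell L₁ L₂ 1) 1 (div3 φ) +
    Real.sqrt (HkSq (cell L₁ L₂ 1) 1 (div3 φ)) *
      Real.sqrt (∑ m ∈ Finset.range 2, gradHm0SqV (cell L₁ L₂ 1) m φ)

/-- Ξ₂ -/
def Xi2 (L₁ L₂ : ℝ) (φ ψ : E3 → V) : ℝ :=
  HkSq (cell L₁ L₂ 1) 3 (div3 φ) + HkSq (cell L₁ L₂ 1) 2 (div3 ψ) +
    Real.sqrt (HkSq (cell L₁ L₂ 1) 3 (div3 φ)) *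
      Real.sqrt (∑ m ∈ Finset.range 4, gradHm0SqV (cell L₁ L₂ 1) m φ) +
    Real.sqrt (HkSq (cell L₁ L₂ 1) 2 (div3 ψ)) * Real.sqrt (uh0SqV (cell L₁ L₂ 1) 3 ψ)

/-- 𝒢₂(T) -/
def G2T (L₁ L₂ : ℝ) (η u : ℝ → E3 → V) (T : ℝ) : ℝ :=
  ∫ τ in Ioc (0 : ℝ) T,
    (HkSq (cell L₁ L₂ 1) 7 (η τ) + HkSq (cell L₁ L₂ 1) 7 (u τ)) / (1 + τ) ^ ((3 : ℝ) / 2)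

/-- 𝒢₃(T) -/
def G3T (L₁ L₂ : ℝ) (η u : ℝ → E3 → V) (ϑ q : ℝ → E3 → ℝ) (T : ℝ) : ℝ :=
  sSup {r | ∃ τ, 0 ≤ τ ∧ τ < T ∧ r = EHfun L₁ L₂ η u ϑ q τ} +
    ∫ τ in Ioc (0 : ℝ) T, DHfun L₁ L₂ η u ϑ q τ

/-- 𝒢₄(T) -/
def G4T (L₁ L₂ : ℝ) (η u : ℝ → E3 → V) (ϑ q : ℝ → E3 → ℝ) (T : ℝ) : ℝ :=
  sSup {r | ∃ τ, 0 ≤ τ ∧ τ < T ∧ r = (1 + τ) ^ 3 * ELfun L₁ L₂ η u ϑ q τ}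

/-- 𝒢₅(T) -/
def G5T (L₁ L₂ : ℝ) (η u : ℝ → E3 → V) (ϑ q : ℝ → E3 → ℝ) (T : ℝ) : ℝ :=
  G1fun L₁ L₂ η T + sSup {r | ∃ τ ∈ Icc (0 : ℝ) T, r = EHfun L₁ L₂ η u ϑ q τ} +
    G4T L₁ L₂ η u ϑ q T

/-! ### Auxiliary material for the growth-rate bounds -/

section GrowthAux

open Bornology

lemma continuous_coord (i : Fin 3) : Continuous fun y : E3 => y i :=
  (EuclideanSpace.proj (𝕜 := ℝ) i).continuous

lemma contDiff_coord (i : Fin 3) : ContDiff ℝ (⊤ : ℕ∞) fun y : E3 => y i :=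
  (EuclideanSpace.proj (𝕜 := ℝ) i).contDiff

lemma isOpen_cell (L₁ L₂ h : ℝ) : IsOpen (cell L₁ L₂ h) := by
  have h0 : IsOpen {y : E3 | y 0 ∈ Ioo 0 (2 * π * L₁)} :=
    isOpen_Ioo.preimage (continuous_coord 0)
  have h1 : IsOpen {y : E3 | y 1 ∈ Ioo 0 (2 * π * L₂)} :=
    isOpen_Ioo.preimage (continuous_coord 1)
  have h2 : IsOpen {y : E3 | y 2 ∈ Ioo 0 h} :=
    isOpen_Ioo.preimage (continuous_coord 2)
  exact h0.and (h1.and h2)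

lemma isBounded_cell (L₁ L₂ h : ℝ) : IsBounded (cell L₁ L₂ h) := by
  refine isBounded_iff_forall_norm_le.2
    ⟨Real.sqrt ((2*π*L₁)^2 + ((2*π*L₂)^2 + h^2)), fun y hy => ?_⟩
  obtain ⟨hy0, hy1, hy2⟩ := hy
  rw [EuclideanSpace.norm_eq]
  apply Real.sqrt_le_sqrt
  rw [Fin.sum_univ_three]
  have e0 : ‖y 0‖^2 ≤ (2*π*L₁)^2 := by
    rw [Real.norm_eq_abs, sq_abs]
    nlinarith [hy0.1, hy0.2]
  have e1 : ‖y 1‖^2 ≤ (2*π*L₂)^2 := by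
    rw [Real.norm_eq_abs, sq_abs]
    nlinarith [hy1.1, hy1.2]
  have e2 : ‖y 2‖^2 ≤ h^2 := by
    rw [Real.norm_eq_abs, sq_abs]
    nlinarith [hy2.1, hy2.2]
  linarith

lemma integrableOn_cell {f : E3 → ℝ} (hf : Continuous f) (L₁ L₂ h : ℝ) :
    IntegrableOn f (cell L₁ L₂ h) := by
  have hK : IsCompact (closure (cell L₁ L₂ h)) := (isBounded_cell L₁ L₂ h).isCompact_closure
  exact (hf.continuousOn.integrableOn_compact hK).mono_set subset_closure

lemma continuous_pdV {f : E3 → V} (hf : ContDiff ℝ (⊤ : ℕ∞) f) (i j : Fin 3) :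
    Continuous fun y => pd i f y j := by
  have h1 : Continuous (fderiv ℝ f) := hf.continuous_fderiv (by simp)
  exact (continuous_apply j).comp (h1.clm_apply continuous_const)

lemma continuous_pdS {f : E3 → ℝ} (hf : ContDiff ℝ (⊤ : ℕ∞) f) (i : Fin 3) :
    Continuous (pd i f) :=
  (hf.continuous_fderiv (by simp)).clm_apply continuous_const

/-! integrand nonnegativity -/

lemma L2SqS_nonneg (S : Set E3) (f : E3 → ℝ) : 0 ≤ L2SqS S f :=
  integral_nonneg fun _ => sq_nonneg _

lemma L2SqV_nonneg (S : Set E3) (f : E3 → V) : 0 ≤ L2SqV S f :=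
  integral_nonneg fun _ => Finset.sum_nonneg fun _ _ => sq_nonneg _

lemma gradSqS_nonneg (S : Set E3) (f : E3 → ℝ) : 0 ≤ gradSqS S f :=
  integral_nonneg fun _ => Finset.sum_nonneg fun _ _ => sq_nonneg _

lemma gradSqV_nonneg (S : Set E3) (f : E3 → V) : 0 ≤ gradSqV S f :=
  integral_nonneg fun _ =>
    Finset.sum_nonneg fun _ _ => Finset.sum_nonneg fun _ _ => sq_nonneg _

/-- ‖∂₃ϖ‖₀² ≤ ‖∇ϖ‖₀² -/
lemma d3_le_grad {ϖ : E3 → V} (hϖ : ContDiff ℝ (⊤ : ℕ∞) ϖ) (L₁ L₂ : ℝ) :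
    L2SqV (cell L₁ L₂ 1) (pd 2 ϖ) ≤ gradSqV (cell L₁ L₂ 1) ϖ := by
  have hci : ∀ i j : Fin 3, Continuous fun y => pd i ϖ y j := continuous_pdV hϖ
  have hint1 : IntegrableOn (fun y => ∑ i, (pd 2 ϖ y i)^2) (cell L₁ L₂ 1) :=
    integrableOn_cell (by continuity) L₁ L₂ 1
  have hint2 : IntegrableOn (fun y => ∑ i, ∑ j, (pd i ϖ y j)^2) (cell L₁ L₂ 1) :=
    integrableOn_cell (by continuity) L₁ L₂ 1
  refine integral_mono hint1 hint2 fun y => ?_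
  calc ∑ i, (pd 2 ϖ y i)^2 = ∑ j, (pd (2 : Fin 3) ϖ y j)^2 := rfl
    _ ≤ ∑ i, ∑ j, (pd i ϖ y j)^2 :=
      Finset.single_le_sum (f := fun i => ∑ j, (pd i ϖ y j)^2)
        (fun i _ => Finset.sum_nonneg fun j _ => sq_nonneg _) (Finset.mem_univ 2)

end GrowthAux
section GrowthAux2

variable {L₁ L₂ R Q Pθ : ℝ}

/-- the basic Cauchy–Schwarz bound on the interaction term -/
lemma ip_bound (hPθ : 0 < Pθ) {ϖ : E3 → V} {φ : E3 → ℝ}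
    (h : admissible L₁ L₂ Pθ ϖ φ) :
    2 * ip (cell L₁ L₂ 1) (comp3 ϖ) φ ≤ (Real.sqrt Pθ)⁻¹ := by
  obtain ⟨⟨⟨hϖc, -, -⟩, -⟩, ⟨⟨hφc, -⟩, -⟩, hnorm⟩ := h
  set S := cell L₁ L₂ 1 with hS
  set u : E3 → ℝ := comp3 ϖ with hu
  have hucont : Continuous u := (continuous_apply (2 : Fin 3)).comp hϖc.continuous
  have hφcont : Continuous φ := hφc.continuous
  have hsq : 0 < Real.sqrt Pθ := Real.sqrt_pos.2 hPθ
  set c := (Real.sqrt Pθ)⁻¹ with hc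
  have hcpos : 0 < c := inv_pos.2 hsq
  have hcs : c * Real.sqrt Pθ = 1 := inv_mul_cancel₀ (ne_of_gt hsq)
  have hIu2 : IntegrableOn (fun y => (u y)^2) S := integrableOn_cell (hucont.pow 2) L₁ L₂ 1
  have hIφ2 : IntegrableOn (fun y => (φ y)^2) S := integrableOn_cell (hφcont.pow 2) L₁ L₂ 1
  have hIuφ : IntegrableOn (fun y => u y * φ y) S := integrableOn_cell (hucont.mul hφcont) L₁ L₂ 1
  have hIsum : IntegrableOn (fun y => ∑ i, (ϖ y i)^2) S := by
    refine integrableOn_cell ?_ L₁ L₂ 1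
    exact continuous_finset_sum _ fun i _ =>
      (((continuous_apply i).comp hϖc.continuous).pow 2)
  have key : 0 ≤ ∫ y in S,
      (c * (u y)^2 + Real.sqrt Pθ * (φ y)^2 - 2 * (u y * φ y)) := by
    refine integral_nonneg fun y => ?_
    simp only [Pi.zero_apply]
    nlinarith [sq_nonneg (c * u y - φ y), hcpos, hcs, sq_nonneg (u y), sq_nonneg (φ y)]
  have expand : ∫ y in S, (c * (u y)^2 + Real.sqrt Pθ * (φ y)^2 - 2 * (u y * φ y))
      = c * (∫ y in S, (u y)^2) + Real.sqrt Pθ * L2SqS S φ - 2 * ip S u φ := by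
    have hf1 : Integrable (fun y => c * (u y)^2) (volume.restrict S) := hIu2.const_mul c
    have hf2 : Integrable (fun y => Real.sqrt Pθ * (φ y)^2) (volume.restrict S) :=
      hIφ2.const_mul _
    have hf3 : Integrable (fun y => 2 * (u y * φ y)) (volume.restrict S) := hIuφ.const_mul 2
    have hf12 : Integrable (fun y => c * (u y)^2 + Real.sqrt Pθ * (φ y)^2)
        (volume.restrict S) := hf1.add hf2
    calc ∫ y in S, (c * (u y)^2 + Real.sqrt Pθ * (φ y)^2 - 2 * (u y * φ y))
        = (∫ y in S, (c * (u y)^2 + Real.sqrt Pθ * (φ y)^2)) - ∫ y in S, 2 * (u y * φ y) :=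
          integral_sub hf12 hf3
      _ = ((∫ y in S, c * (u y)^2) + ∫ y in S, Real.sqrt Pθ * (φ y)^2)
            - ∫ y in S, 2 * (u y * φ y) := by rw [integral_add hf1 hf2]
      _ = c * (∫ y in S, (u y)^2) + Real.sqrt Pθ * L2SqS S φ - 2 * ip S u φ := by
            rw [integral_const_mul, integral_const_mul, integral_const_mul]
            rfl
  have hu2le : (∫ y in S, (u y)^2) ≤ L2SqV S ϖ := by
    refine integral_mono hIu2 hIsum fun y => ?_
    exact Finset.single_le_sum (f := fun i => (ϖ y i)^2)
      (fun i _ => sq_nonneg _) (Finset.mem_univ 2)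
  have hPs : Real.sqrt Pθ * Real.sqrt Pθ = Pθ := Real.mul_self_sqrt hPθ.le
  have heq : Real.sqrt Pθ = c * Pθ := by
    rw [hc]; field_simp; exact Real.sq_sqrt hPθ.le
  have hfin : c * (L2SqV S ϖ + Pθ * L2SqS S φ) = c := by rw [hnorm, mul_one]
  have h2 : 2 * ip S u φ ≤ c * (∫ y in S, (u y)^2) + Real.sqrt Pθ * L2SqS S φ := by
    rw [expand] at key; linarith
  have h3 : c * (∫ y in S, (u y)^2) ≤ c * L2SqV S ϖ :=
    mul_le_mul_of_nonneg_left hu2le hcpos.le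
  calc 2 * ip S u φ ≤ c * L2SqV S ϖ + Real.sqrt Pθ * L2SqS S φ := by linarith
    _ = c * (L2SqV S ϖ + Pθ * L2SqS S φ) := by rw [heq]; ring
    _ = c := hfin

lemma twoRip_le_bound (hR : 0 < R) (hPθ : 0 < Pθ) {ϖ : E3 → V} {φ : E3 → ℝ}
    (h : admissible L₁ L₂ Pθ ϖ φ) :
    2 * R * ip (cell L₁ L₂ 1) (comp3 ϖ) φ ≤ R / Real.sqrt Pθ := by
  have h1 := ip_bound hPθ h
  have : R * (2 * ip (cell L₁ L₂ 1) (comp3 ϖ) φ) ≤ R * (Real.sqrt Pθ)⁻¹ :=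
    mul_le_mul_of_nonneg_left h1 hR.le
  calc 2 * R * ip (cell L₁ L₂ 1) (comp3 ϖ) φ
      = R * (2 * ip (cell L₁ L₂ 1) (comp3 ϖ) φ) := by ring
    _ ≤ R * (Real.sqrt Pθ)⁻¹ := this
    _ = R / Real.sqrt Pθ := by rw [div_eq_mul_inv]

lemma DR_le_twoRip {τ : ℝ} (hτ : 0 ≤ τ) (ϖ : E3 → V) (φ : E3 → ℝ) :
    DRfun L₁ L₂ R ϖ φ τ ≤ 2 * R * ip (cell L₁ L₂ 1) (comp3 ϖ) φ := by
  have h1 := gradSqV_nonneg (cell L₁ L₂ 1) ϖ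
  have h2 := gradSqS_nonneg (cell L₁ L₂ 1) φ
  have h3 : 0 ≤ τ * gradSqV (cell L₁ L₂ 1) ϖ := mul_nonneg hτ h1
  unfold DRfun; linarith

lemma F_le_DR {s τ : ℝ} (hs : 0 < s) (hQ : 0 ≤ Q) (ϖ : E3 → V) (φ : E3 → ℝ) :
    Ffun L₁ L₂ R Q ϖ φ s τ ≤ DRfun L₁ L₂ R ϖ φ τ := by
  have h1 : 0 ≤ Q / s * L2SqV (cell L₁ L₂ 1) (pd 2 ϖ) :=
    mul_nonneg (div_nonneg hQ hs.le) (L2SqV_nonneg _ _)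
  unfold Ffun; linarith

lemma bddAbove_DRset (hR : 0 < R) (hPθ : 0 < Pθ) :
    BddAbove {r | ∃ ϖ φ, admissible L₁ L₂ Pθ ϖ φ ∧ r = DRfun L₁ L₂ R ϖ φ 1} := by
  refine ⟨R / Real.sqrt Pθ, ?_⟩
  rintro r ⟨ϖ, φ, hadm, rfl⟩
  exact (DR_le_twoRip zero_le_one ϖ φ).trans (twoRip_le_bound hR hPθ hadm)

lemma bddAbove_Fset (hR : 0 < R) (hPθ : 0 < Pθ) {s τ : ℝ} (hs : 0 < s) (hτ : 0 ≤ τ)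
    (hQ : 0 ≤ Q) :
    BddAbove {r | ∃ ϖ φ, admissible L₁ L₂ Pθ ϖ φ ∧ r = Ffun L₁ L₂ R Q ϖ φ s τ} := by
  refine ⟨R / Real.sqrt Pθ, ?_⟩
  rintro r ⟨ϖ, φ, hadm, rfl⟩
  exact ((F_le_DR hs hQ ϖ φ).trans (DR_le_twoRip hτ ϖ φ)).trans (twoRip_le_bound hR hPθ hadm)

lemma Lambda0_le_bound (hR : 0 < R) (hPθ : 0 < Pθ) :
    Lambda0 L₁ L₂ R Pθ ≤ R / Real.sqrt Pθ := by
  refine Real.sSup_le ?_ (div_nonneg hR.le (Real.sqrt_nonneg _))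
  rintro r ⟨ϖ, φ, hadm, rfl⟩
  exact (DR_le_twoRip zero_le_one ϖ φ).trans (twoRip_le_bound hR hPθ hadm)

end GrowthAux2
section GrowthAux3

variable {L₁ L₂ Pθ : ℝ}

lemma exists_admissible (hL₁ : 0 < L₁) (hL₂ : 0 < L₂) (hPθ : 0 < Pθ) :
    ∃ ϖ φ, admissible L₁ L₂ Pθ ϖ φ := by
  set S := cell L₁ L₂ 1 with hS
  set g : E3 → ℝ := fun y => Real.sin (π * y 2) with hg
  have hgc : ContDiff ℝ (⊤ : ℕ∞) g :=
    Real.contDiff_sin.comp (contDiff_const.mul (contDiff_coord 2))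
  have hIint : IntegrableOn (fun y => g y ^ 2) S :=
    integrableOn_cell ((hgc.continuous).pow 2) L₁ L₂ 1
  set I := ∫ y in S, g y ^ 2 with hI
  have hSopen := isOpen_cell L₁ L₂ 1
  have hSne : S.Nonempty := by
    refine ⟨(WithLp.equiv 2 (Fin 3 → ℝ)).symm ![π * L₁, π * L₂, 1/2], ?_, ?_, ?_⟩
    · rw [WithLp.equiv_symm_apply, PiLp.toLp_apply]
      simp only [Matrix.cons_val_zero]
      constructor
      · exact mul_pos pi_pos hL₁
      · nlinarith [mul_pos pi_pos hL₁]
    · rw [WithLp.equiv_symm_apply, PiLp.toLp_apply]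
      simp only [Matrix.cons_val_one, Matrix.head_cons, Matrix.cons_val_zero]
      constructor
      · exact mul_pos pi_pos hL₂
      · nlinarith [mul_pos pi_pos hL₂]
    · rw [WithLp.equiv_symm_apply, PiLp.toLp_apply]
      show (0:ℝ) < 1/2 ∧ (1/2:ℝ) < 1
      norm_num
  have hsin : ∀ y ∈ S, 0 < Real.sin (π * y 2) := by
    intro y hy
    refine Real.sin_pos_of_pos_of_lt_pi (mul_pos pi_pos hy.2.2.1) ?_
    calc π * y 2 < π * 1 := by
          exact mul_lt_mul_of_pos_left hy.2.2.2 pi_pos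
      _ = π := mul_one π
  have hIpos : 0 < I := by
    rw [hI]
    rw [setIntegral_pos_iff_support_of_nonneg_ae
      (Filter.Eventually.of_forall fun y => sq_nonneg _) hIint]
    refine lt_of_lt_of_le (hSopen.measure_pos volume hSne) (measure_mono ?_)
    intro y hy
    exact ⟨pow_ne_zero _ (ne_of_gt (hsin y hy)), hy⟩
  have hPI : 0 < Pθ * I := mul_pos hPθ hIpos
  set cc := (Real.sqrt (Pθ * I))⁻¹ with hcc
  refine ⟨fun _ => (0 : V), fun y => cc * g y, ?_, ⟨⟨?_, ?_⟩, ?_⟩, ?_⟩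
  · refine ⟨⟨contDiff_const, fun y => ⟨rfl, rfl⟩, fun y _ => rfl⟩, fun y => ?_⟩
    simp [div3, pd, fderiv_const_apply]
  · exact contDiff_const.mul hgc
  · intro y
    constructor <;>
      simp [hg, PiLp.add_apply, PiLp.smul_apply, e3, EuclideanSpace.single_apply]
  · intro y hy
    rcases hy with h0 | h1
    · simp [hg, h0]
    · simp [hg, h1]
  · have h0 : L2SqV S (fun _ => (0 : V)) = 0 := by
      simp [L2SqV]
    have h1 : L2SqS S (fun y => cc * g y) = cc ^ 2 * I := by
      unfold L2SqS
      simp_rw [mul_pow]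
      rw [integral_const_mul]
    rw [show cell L₁ L₂ 1 = S from rfl, h0, h1, zero_add, hcc, inv_pow,
      Real.sq_sqrt hPI.le]
    field_simp
end GrowthAux3
section GrowthAux4

/-- quadratic estimate giving the lower bound `Λ₀ - √(Q𝓡) ≤ a` -/
lemma aux_quad_lower {l a x : ℝ} (hax : a * (l - a) ≤ x) (hx : 0 ≤ x)
    (h2a : l - a ≤ a) : l - Real.sqrt x ≤ a := by
  rcases le_or_gt (l - a) 0 with h | h
  · have := Real.sqrt_nonneg x; linarith
  · by_contra hcon
    push_neg at hcon
    have h1 : Real.sqrt x < l - a := by linarith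
    have h3 : Real.sqrt x ^ 2 = x := Real.sq_sqrt hx
    nlinarith [Real.sqrt_nonneg x, h1, h3, hax, h2a]

/-- a point above `l/2` where the quadratic is nonnegative lies above the vertex -/
lemma aux_quad_vertex {l c x b : ℝ} (hPb : 0 ≤ b ^ 2 - (l + c) * b + x)
    (hb : l / 2 < b) (hx : x ≤ l ^ 2 / 4) (hc : 0 < c) (hl : 0 < l) :
    (l + c) / 2 ≤ b := by
  by_contra hcon
  push_neg at hcon
  nlinarith [mul_pos (show (0:ℝ) < b - l / 2 by linarith)
      (show (0:ℝ) < (l + c) - l / 2 - b by nlinarith), mul_pos hc hl]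

end GrowthAux4

section GrowthAux5
/-- quadratic consequence of the fixed-point lower bound -/
lemma aux_Pb {b l q Q RR : ℝ} (hb : 0 < b) (hmain : l - (Q / b - q) * RR ≤ b) :
    0 ≤ b ^ 2 - (l + q * RR) * b + Q * RR := by
  have h1 : (l - (Q / b - q) * RR) * b ≤ b * b :=
    mul_le_mul_of_nonneg_right hmain hb.le
  have h2 : Q / b * RR * b = Q * RR := by field_simp
  nlinarith [h1, h2]
end GrowthAux5
set_option maxHeartbeats 2000000 in
/-- upper and lower bounds for the growth rate Λ* = Λ(1). -/
theorem growth_rate_bounds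
    (L₁ L₂ R Q Pθ : ℝ) (hL₁ : 0 < L₁) (hL₂ : 0 < L₂)
    (hR : 0 < R) (hQpos : 0 ≤ Q) (hPθ : 0 < Pθ)
    (hconv : R0 L₁ L₂ < R)
    (hQc : Real.sqrt Q ≤ Lambda0 L₁ L₂ R Pθ / (2 * Real.sqrt (scrR L₁ L₂ R Pθ)))
    (hQ1 : Q ∈ Ico (0 : ℝ) 1)
    -- Λ(τ) is the unique fixed point of s ↦ α(s,τ) on (Λ₀/2,∞), for each τ ∈ (0,1]
    (Λ : ℝ → ℝ)
    (hfix : ∀ τ ∈ Ioc (0 : ℝ) 1, Lambda0 L₁ L₂ R Pθ / 2 < Λ τ ∧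
      Λ τ = alphaFun L₁ L₂ R Q Pθ (Λ τ) τ) :
    Lambda0 L₁ L₂ R Pθ - Real.sqrt (Q * scrR L₁ L₂ R Pθ) ≤ Λ 1 ∧
    Λ 1 ≤ Λ (1 - Real.sqrt Q) ∧
    Λ (1 - Real.sqrt Q) ≤ (1 - Real.sqrt Q) * Lambda0 L₁ L₂ R Pθ +
      R * Real.sqrt (Q / Pθ) := by
  set Λ₀ := Lambda0 L₁ L₂ R Pθ with hΛ₀
  set 𝓡 := scrR L₁ L₂ R Pθ with h𝓡
  have hsPθ : 0 < Real.sqrt Pθ := Real.sqrt_pos.2 hPθ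
  have h𝓡eq : 𝓡 = R / Real.sqrt Pθ - Λ₀ := h𝓡.trans rfl
  have hΛ₀le : Λ₀ ≤ R / Real.sqrt Pθ := Lambda0_le_bound hR hPθ
  have h𝓡0 : 0 ≤ 𝓡 := by rw [h𝓡eq]; linarith
  have hRs : R / Real.sqrt Pθ = 𝓡 + Λ₀ := by rw [h𝓡eq]; ring
  have hΛ₀S : Λ₀ = sSup {r | ∃ ϖ φ, admissible L₁ L₂ Pθ ϖ φ ∧ r = DRfun L₁ L₂ R ϖ φ 1} :=
    hΛ₀.trans rfl
  clear_value Λ₀ 𝓡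
  rcases eq_or_lt_of_le hQpos with hQ0 | hQpos'
  · -- the case Q = 0
    subst hQ0
    obtain ⟨ha1, ha2⟩ := hfix 1 ⟨one_pos, le_rfl⟩
    have hΛ1 : Λ 1 = Λ₀ := by
      rw [ha2, hΛ₀]
      show sSup _ = sSup _
      congr 1
      ext r
      constructor
      · rintro ⟨ϖ, φ, hadm, rfl⟩
        refine ⟨ϖ, φ, hadm, ?_⟩
        unfold Ffun; simp
      · rintro ⟨ϖ, φ, hadm, rfl⟩
        refine ⟨ϖ, φ, hadm, ?_⟩
        unfold Ffun; simp
    refine ⟨?_, ?_, ?_⟩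
    · rw [zero_mul, Real.sqrt_zero, sub_zero, hΛ1]
    · rw [Real.sqrt_zero, sub_zero]
    · rw [Real.sqrt_zero, sub_zero, zero_div, Real.sqrt_zero, mul_zero, add_zero,
        one_mul, hΛ1]
  · -- the case Q > 0
    have hq0 : 0 < Real.sqrt Q := Real.sqrt_pos.2 hQpos'
    have h𝓡pos : 0 < 𝓡 := by
      by_contra hcon
      push_neg at hcon
      have hz : Real.sqrt 𝓡 = 0 := Real.sqrt_eq_zero'.2 hcon
      rw [hz, mul_zero, div_zero] at hQc
      linarith
    have hs𝓡 : 0 < Real.sqrt 𝓡 := Real.sqrt_pos.2 h𝓡pos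
    have hΛ₀pos : 0 < Λ₀ := by
      by_contra hcon
      push_neg at hcon
      have h2 : Λ₀ / (2 * Real.sqrt 𝓡) ≤ 0 := by
        apply div_nonpos_of_nonpos_of_nonneg hcon
        positivity
      linarith
    have hq𝓡 : Real.sqrt Q * Real.sqrt 𝓡 ≤ Λ₀ / 2 := by
      have h1 := (le_div_iff₀ (by positivity : (0:ℝ) < 2 * Real.sqrt 𝓡)).1 hQc
      linarith
    have hQ𝓡 : Q * 𝓡 ≤ Λ₀ ^ 2 / 4 := by
      have h2 : (Real.sqrt Q * Real.sqrt 𝓡) ^ 2 = Q * 𝓡 := by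
        rw [mul_pow, Real.sq_sqrt hQpos'.le, Real.sq_sqrt h𝓡pos.le]
      have h3 := pow_le_pow_left₀ (by positivity) hq𝓡 2
      rw [h2] at h3
      have h4 : (Λ₀ / 2) ^ 2 = Λ₀ ^ 2 / 4 := by ring
      linarith
    have hQsq : Real.sqrt Q ^ 2 = Q := Real.sq_sqrt hQpos'.le
    have hq1 : Real.sqrt Q < 1 := by
      refine (Real.sqrt_lt' one_pos).2 ?_
      rw [one_pow]; exact hQ1.2
    set q := Real.sqrt Q with hqdef
    set τ' := 1 - q with hτ'def
    have hτ'q : 1 - τ' = q := by rw [hτ'def]; ring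
    have hτ'pos : 0 < τ' := by rw [hτ'def]; linarith
    have hτ'le : τ' ≤ 1 := by rw [hτ'def]; linarith
    obtain ⟨ha1, ha2⟩ := hfix 1 ⟨one_pos, le_rfl⟩
    obtain ⟨hb1, hb2⟩ := hfix τ' ⟨hτ'pos, hτ'le⟩
    set a := Λ 1 with hadef
    set b := Λ τ' with hbdef
    have hapos : 0 < a := by linarith
    have hbpos : 0 < b := by linarith
    clear_value q τ' a b
    obtain ⟨ϖ₀, φ₀, hadm₀⟩ := exists_admissible (Pθ := Pθ) hL₁ hL₂ hPθ
    -- basic facts about the variational sets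
    have hAne : {r | ∃ ϖ φ, admissible L₁ L₂ Pθ ϖ φ ∧ r = DRfun L₁ L₂ R ϖ φ 1}.Nonempty :=
      ⟨_, ϖ₀, φ₀, hadm₀, rfl⟩
    have hAbdd := bddAbove_DRset (L₁ := L₁) (L₂ := L₂) hR hPθ
    have hαdef : ∀ s τ : ℝ, alphaFun L₁ L₂ R Q Pθ s τ
        = sSup {r | ∃ ϖ φ, admissible L₁ L₂ Pθ ϖ φ ∧ r = Ffun L₁ L₂ R Q ϖ φ s τ} :=
      fun s τ => rfl
    have hnear : ∀ ε > (0:ℝ), ∃ ϖ φ, admissible L₁ L₂ Pθ ϖ φ ∧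
        Λ₀ - ε < DRfun L₁ L₂ R ϖ φ 1 := by
      intro ε hε
      obtain ⟨r, hrmem, hrlt⟩ := exists_lt_of_lt_csSup hAne
        (show Λ₀ - ε < sSup _ by rw [← hΛ₀S]; linarith)
      obtain ⟨ϖ, φ, hadm, rfl⟩ := hrmem
      exact ⟨ϖ, φ, hadm, hrlt⟩
    have hDRle : ∀ {ϖ φ}, admissible L₁ L₂ Pθ ϖ φ → DRfun L₁ L₂ R ϖ φ 1 ≤ Λ₀ := by
      intro ϖ φ hadm
      rw [hΛ₀S]
      exact le_csSup hAbdd ⟨ϖ, φ, hadm, rfl⟩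
    have hgradbound : ∀ {ϖ φ}, admissible L₁ L₂ Pθ ϖ φ →
        gradSqV (cell L₁ L₂ 1) ϖ ≤ R / Real.sqrt Pθ - DRfun L₁ L₂ R ϖ φ 1 := by
      intro ϖ φ hadm
      have h1 := twoRip_le_bound hR hPθ hadm
      have h2 := gradSqS_nonneg (cell L₁ L₂ 1) φ
      have h3 : DRfun L₁ L₂ R ϖ φ 1 + gradSqV (cell L₁ L₂ 1) ϖ + gradSqS (cell L₁ L₂ 1) φ
          = 2 * R * ip (cell L₁ L₂ 1) (comp3 ϖ) φ := by unfold DRfun; ring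
      linarith
    have hd3le : ∀ {ϖ : E3 → V} {φ : E3 → ℝ}, admissible L₁ L₂ Pθ ϖ φ →
        L2SqV (cell L₁ L₂ 1) (pd 2 ϖ) ≤ gradSqV (cell L₁ L₂ 1) ϖ :=
      fun hadm => d3_le_grad hadm.1.1.1 L₁ L₂
    have hFeq : ∀ (ϖ : E3 → V) (φ : E3 → ℝ) (s τ : ℝ),
        Ffun L₁ L₂ R Q ϖ φ s τ = DRfun L₁ L₂ R ϖ φ 1
          + (1 - τ) * gradSqV (cell L₁ L₂ 1) ϖ
          - Q / s * L2SqV (cell L₁ L₂ 1) (pd 2 ϖ) := by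
      intro ϖ φ s τ; unfold Ffun DRfun; ring
    have hFleα : ∀ {ϖ φ}, admissible L₁ L₂ Pθ ϖ φ → ∀ {s τ : ℝ}, 0 < s → 0 ≤ τ →
        Ffun L₁ L₂ R Q ϖ φ s τ ≤ alphaFun L₁ L₂ R Q Pθ s τ := by
      intro ϖ φ hadm s τ hs hτ
      rw [hαdef]
      exact le_csSup (bddAbove_Fset hR hPθ hs hτ hQpos) ⟨ϖ, φ, hadm, rfl⟩
    have hαle : ∀ s τ : ℝ, 0 < s → 0 ≤ τ → τ ≤ 1 →
        alphaFun L₁ L₂ R Q Pθ s τ ≤ Λ₀ + (1 - τ) * 𝓡 := by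
      intro s τ hs hτ0 hτ1
      rw [hαdef]
      refine Real.sSup_le ?_ (by linarith [mul_nonneg (sub_nonneg.2 hτ1) h𝓡0]) 
      rintro r ⟨ϖ, φ, hadm, rfl⟩
      have h1 : Ffun L₁ L₂ R Q ϖ φ s τ ≤ DRfun L₁ L₂ R ϖ φ τ := F_le_DR hs hQpos ϖ φ
      have h2 : DRfun L₁ L₂ R ϖ φ τ = τ * DRfun L₁ L₂ R ϖ φ 1
          + (1 - τ) * (2 * R * ip (cell L₁ L₂ 1) (comp3 ϖ) φ - gradSqS (cell L₁ L₂ 1) φ) := by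
        unfold DRfun; ring
      have h3 := hDRle hadm
      have h4 := twoRip_le_bound hR hPθ hadm
      have h5 := gradSqS_nonneg (cell L₁ L₂ 1) φ
      have h6 : 2 * R * ip (cell L₁ L₂ 1) (comp3 ϖ) φ - gradSqS (cell L₁ L₂ 1) φ
          ≤ 𝓡 + Λ₀ := by rw [← hRs]; linarith
      have h7 : τ * DRfun L₁ L₂ R ϖ φ 1 ≤ τ * Λ₀ := mul_le_mul_of_nonneg_left h3 hτ0
      have h8 : (1 - τ) * (2 * R * ip (cell L₁ L₂ 1) (comp3 ϖ) φ - gradSqS (cell L₁ L₂ 1) φ)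
          ≤ (1 - τ) * (𝓡 + Λ₀) := mul_le_mul_of_nonneg_left h6 (by linarith)
      linarith [h1, h2, h7, h8]
    -- (I) core lower bound: Λ₀ - Q𝓡/a ≤ a
    have hG1core : Λ₀ - Q * 𝓡 / a ≤ a := by
      refine le_of_forall_pos_le_add fun ε hε => ?_
      have hQa : 0 ≤ Q / a := div_nonneg hQpos'.le hapos.le
      have hcoef : 0 < 1 + Q / a := by linarith
      set ε₁ := ε / (1 + Q / a) with hε₁
      have hε₁pos : 0 < ε₁ := div_pos hε hcoef
      obtain ⟨ϖ, φ, hadm, hDR⟩ := hnear ε₁ hε₁pos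
      have hN3 : L2SqV (cell L₁ L₂ 1) (pd 2 ϖ) ≤ 𝓡 + ε₁ := by
        have hg1 := hgradbound hadm
        have hg2 := hd3le hadm
        rw [hRs] at hg1
        linarith
      have hF := hFleα hadm (s := a) (τ := 1) hapos zero_le_one
      rw [← ha2, hFeq] at hF
      have hzero : (1 - (1:ℝ)) * gradSqV (cell L₁ L₂ 1) ϖ = 0 := by ring
      have h5 : Q / a * L2SqV (cell L₁ L₂ 1) (pd 2 ϖ) ≤ Q / a * (𝓡 + ε₁) :=
        mul_le_mul_of_nonneg_left hN3 hQa
      have hring : Q / a * (𝓡 + ε₁) = Q * 𝓡 / a + Q / a * ε₁ := by ring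
      have hεeq : ε₁ + Q / a * ε₁ = ε := by
        rw [hε₁]; field_simp
      linarith [hF, hDR, h5, hring, hεeq, hzero]
    have hfact1 : a * (Λ₀ - a) ≤ Q * 𝓡 := by
      have h1 : Λ₀ - a ≤ Q * 𝓡 / a := by linarith
      calc a * (Λ₀ - a) ≤ a * (Q * 𝓡 / a) := mul_le_mul_of_nonneg_left h1 hapos.le
        _ = Q * 𝓡 := by field_simp
    -- goal 1
    have hgoal1 : Λ₀ - Real.sqrt (Q * 𝓡) ≤ a :=
      aux_quad_lower hfact1 (mul_nonneg hQpos'.le h𝓡0) (by linarith)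
    -- a ≤ Λ₀
    have haleΛ₀ : a ≤ Λ₀ := by
      have h1 := hαle a 1 hapos zero_le_one le_rfl
      rw [← ha2] at h1
      have h0 : (1 - (1:ℝ)) * 𝓡 = 0 := by ring
      linarith
    -- goal 3
    have hgoal3 : b ≤ τ' * Λ₀ + R * Real.sqrt (Q / Pθ) := by
      have h1 := hαle b τ' hbpos hτ'pos.le hτ'le
      rw [← hb2, hτ'q] at h1
      have h2 : Real.sqrt (Q / Pθ) = q / Real.sqrt Pθ := by
        rw [hqdef]; exact Real.sqrt_div hQpos'.le Pθ
      rw [h2, hτ'def]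
      have h4 : R * (q / Real.sqrt Pθ) = q * 𝓡 + q * Λ₀ := by
        rw [show R * (q / Real.sqrt Pθ) = q * (R / Real.sqrt Pθ) by ring, hRs]; ring
      have h5 : (1 - q) * Λ₀ + R * (q / Real.sqrt Pθ) = Λ₀ + q * 𝓡 := by
        rw [h4]; ring
      linarith
    -- goal 2 : a ≤ b
    have hgoal2 : a ≤ b := by
      by_contra hcon
      push_neg at hcon
      -- step A : a ≤ α(a, τ')
      have hstepA : a ≤ alphaFun L₁ L₂ R Q Pθ a τ' := by
        conv_lhs => rw [ha2]
        rw [hαdef a 1, hαdef a τ']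
        refine csSup_le ⟨_, ϖ₀, φ₀, hadm₀, rfl⟩ ?_
        rintro r ⟨ϖ, φ, hadm, rfl⟩
        have hgV := gradSqV_nonneg (cell L₁ L₂ 1) ϖ
        have h1 : Ffun L₁ L₂ R Q ϖ φ a 1 ≤ Ffun L₁ L₂ R Q ϖ φ a τ' := by
          rw [hFeq, hFeq, hτ'q]
          linarith [mul_nonneg (le_of_lt hq0) hgV]
        refine h1.trans (le_csSup (bddAbove_Fset hR hPθ hapos hτ'pos.le hQpos) ⟨ϖ, φ, hadm, rfl⟩)
      -- step B : a + b ≤ Λ₀ + q 𝓡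
      have hstepB : a + b ≤ Λ₀ + q * 𝓡 := by
        refine le_of_forall_pos_le_add fun ε hε => ?_
        set d := a - b with hd
        have hdpos : 0 < d := by rw [hd]; linarith
        set C := 2 * d + b with hC
        have hCpos : 0 < C := by rw [hC]; linarith
        set ε₁ := ε * d / C with hε₁
        have hε₁pos : 0 < ε₁ := div_pos (mul_pos hε hdpos) hCpos
        clear_value d C ε₁
        have hlt : a - ε₁ < sSup {r | ∃ ϖ φ, admissible L₁ L₂ Pθ ϖ φ ∧
            r = Ffun L₁ L₂ R Q ϖ φ a τ'} := by
          rw [← hαdef a τ']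
          linarith [hstepA]
        have hne2 : {r | ∃ ϖ φ, admissible L₁ L₂ Pθ ϖ φ ∧
            r = Ffun L₁ L₂ R Q ϖ φ a τ'}.Nonempty := ⟨_, ϖ₀, φ₀, hadm₀, rfl⟩
        obtain ⟨r, hrmem, hrlt⟩ := exists_lt_of_lt_csSup hne2 hlt
        obtain ⟨ϖ, φ, hadm, rfl⟩ := hrmem
        set N := L2SqV (cell L₁ L₂ 1) (pd 2 ϖ) with hN
        have hN0 : 0 ≤ N := L2SqV_nonneg _ _
        set G := Q / a * N with hG
        have hG0 : 0 ≤ G := mul_nonneg (div_nonneg hQpos'.le hapos.le) hN0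
        clear_value N G
        -- lower bound on G from the fixed point b
        have hFb : Ffun L₁ L₂ R Q ϖ φ b τ' ≤ b := by
          conv_rhs => rw [hb2]
          exact hFleα hadm hbpos hτ'pos.le
        have hdiff : Ffun L₁ L₂ R Q ϖ φ b τ'
            = Ffun L₁ L₂ R Q ϖ φ a τ' + (Q / a - Q / b) * N := by
          rw [hFeq ϖ φ b τ', hFeq ϖ φ a τ', ← hN]; ring
        have hid : (Q / b - Q / a) * N = G * d / b := by
          rw [hG, hd]; field_simp
        have h5 : d - ε₁ ≤ G * d / b := by
          rw [← hid]
          have : a - ε₁ + (Q / a - Q / b) * N < b := by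
            rw [hdiff] at hFb; linarith
          linarith
        have hkey1 : (d - ε₁) * b ≤ G * d := (le_div_iff₀ hbpos).1 h5
        -- upper bound on G
        set t := Q * N / ε₁ + a + 1 with ht
        have ht0 : 0 ≤ Q * N / ε₁ := div_nonneg (mul_nonneg hQpos'.le hN0) hε₁pos.le
        clear_value t
        have htpos : 0 < t := by rw [ht]; linarith
        have hta : a ≤ t := by rw [ht]; linarith
        have hQNt : Q / t * N ≤ ε₁ := by
          have hid2 : ε₁ * t = Q * N + ε₁ * (a + 1) := by
            rw [ht]; field_simp; ring
          have h7 : Q * N ≤ ε₁ * t := by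
            linarith [hid2, mul_pos hε₁pos (show (0:ℝ) < a + 1 by linarith)]
          have h8 : Q / t * N = Q * N / t := by ring
          rw [h8, div_le_iff₀ htpos]
          linarith
        have hFt : Ffun L₁ L₂ R Q ϖ φ t τ' ≤ Λ₀ + q * 𝓡 := by
          have h9 := hαle t τ' htpos hτ'pos.le hτ'le
          rw [hτ'q] at h9
          exact (hFleα hadm htpos hτ'pos.le).trans h9
        have hdiff2 : Ffun L₁ L₂ R Q ϖ φ t τ'
            = Ffun L₁ L₂ R Q ϖ φ a τ' + (Q / a - Q / t) * N := by
          rw [hFeq ϖ φ t τ', hFeq ϖ φ a τ', ← hN]; ring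
        have hkey2 : G ≤ Λ₀ + q * 𝓡 - a + 2 * ε₁ := by
          have h10 : Ffun L₁ L₂ R Q ϖ φ a τ' + (Q / a) * N - (Q / t) * N ≤ Λ₀ + q * 𝓡 := by
            rw [hdiff2] at hFt; linarith
          rw [hG]
          linarith [hrlt, hQNt]
        -- combine
        have hεC : ε₁ * C = ε * d := by
          rw [hε₁]; field_simp
        have hfin : (d - ε₁) * b ≤ (Λ₀ + q * 𝓡 - a + 2 * ε₁) * d :=
          hkey1.trans (mul_le_mul_of_nonneg_right hkey2 hdpos.le)
        -- expand : bd - ε₁ b ≤ (M - a)d + 2ε₁ d with M = Λ₀ + q𝓡 ; and ε₁(2d + b) = εd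
        have hexp : (a + b - (Λ₀ + q * 𝓡)) * d ≤ ε₁ * C := by
          rw [hC]; linarith [hfin]
        
        rw [hεC] at hexp
        have hdiv : a + b - (Λ₀ + q * 𝓡) ≤ ε := (mul_le_mul_iff_left₀ hdpos).1 hexp
        linarith
      -- step C : dichotomy on b vs q
      rcases le_or_gt q b with hqb | hbq
      · -- q ≤ b : then Λ₀ ≤ b, contradicting b < a ≤ Λ₀
        have hbΛ₀ : Λ₀ ≤ b := by
          refine le_of_forall_pos_le_add fun ε hε => ?_
          obtain ⟨ϖ, φ, hadm, hDR⟩ := hnear ε hε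
          have hF := hFleα hadm (s := b) (τ := τ') hbpos hτ'pos.le
          rw [← hb2, hFeq, hτ'q] at hF
          have h1 : Q / b ≤ q := by
            rw [div_le_iff₀ hbpos]
            have h1a : q * q ≤ q * b := mul_le_mul_of_nonneg_left hqb hq0.le
            have h1b : q ^ 2 = q * q := sq q
            linarith
          have h2 := hd3le hadm
          have h3 := L2SqV_nonneg (cell L₁ L₂ 1) (pd 2 ϖ)
          have h4 := gradSqV_nonneg (cell L₁ L₂ 1) ϖ
          have h5 : Q / b * L2SqV (cell L₁ L₂ 1) (pd 2 ϖ)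
              ≤ q * L2SqV (cell L₁ L₂ 1) (pd 2 ϖ) := mul_le_mul_of_nonneg_right h1 h3
          have h6 : q * L2SqV (cell L₁ L₂ 1) (pd 2 ϖ) ≤ q * gradSqV (cell L₁ L₂ 1) ϖ :=
            mul_le_mul_of_nonneg_left h2 (le_of_lt hq0)
          linarith [hF, hDR, h5, h6]
        linarith
      · -- b < q : quadratic estimate
        have hQbq : 0 < Q / b - q := by
          rw [sub_pos, lt_div_iff₀ hbpos]
          have h1a : q * b < q * q := mul_lt_mul_of_pos_left hbq hq0
          have h1b : q ^ 2 = q * q := sq q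
          linarith
        have hPb : 0 ≤ b ^ 2 - (Λ₀ + q * 𝓡) * b + Q * 𝓡 := by
          have hmain : Λ₀ - (Q / b - q) * 𝓡 ≤ b := by
            refine le_of_forall_pos_le_add fun ε hε => ?_
            set ε₁ := ε / (1 + (Q / b - q)) with hε₁
            have hε₁pos : 0 < ε₁ := div_pos hε (by linarith)
            obtain ⟨ϖ, φ, hadm, hDR⟩ := hnear ε₁ hε₁pos
            have hgrad : gradSqV (cell L₁ L₂ 1) ϖ ≤ 𝓡 + ε₁ := by
              have hg1 := hgradbound hadm
              rw [hRs] at hg1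
              linarith
            have hF := hFleα hadm (s := b) (τ := τ') hbpos hτ'pos.le
            rw [← hb2, hFeq, hτ'q] at hF
            have h2 := hd3le hadm
            have h6 : (Q / b - q) * gradSqV (cell L₁ L₂ 1) ϖ ≤ (Q / b - q) * (𝓡 + ε₁) :=
              mul_le_mul_of_nonneg_left hgrad hQbq.le
            have h7 : Q / b * L2SqV (cell L₁ L₂ 1) (pd 2 ϖ)
                ≤ Q / b * gradSqV (cell L₁ L₂ 1) ϖ :=
              mul_le_mul_of_nonneg_left h2 (div_nonneg hQpos'.le hbpos.le)
            have hεeq : ε₁ * (1 + (Q / b - q)) = ε := by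
              rw [hε₁]
              exact div_mul_cancel₀ ε (ne_of_gt (by linarith))
            linarith [hF, hDR, h6, h7, hεeq]
          exact aux_Pb hbpos hmain
        have hq𝓡pos : 0 < q * 𝓡 := mul_pos hq0 h𝓡pos
        have hbv : (Λ₀ + q * 𝓡) / 2 ≤ b :=
          aux_quad_vertex hPb hb1 hQ𝓡 hq𝓡pos hΛ₀pos
        linarith [hstepB, hbv, hcon]
    exact ⟨hgoal1, hgoal2, hgoal3⟩

end MB
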